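/- Let f : ℝ → ℂ be a Schwartz function. Then for every z ∈ ℂ: (1) √2 · z · (SB f)(z) = SB[u ↦ u·f(u) − f′(u)](z), and (2) z·(SB f)(z) + (d/dz)(SB f)(z) = √2 · SB[u ↦ u·f(u)](z). Equivalently, the Segal–Bargmann transform intertwines the creation operator (u − d/du)/√2 with multiplication by z, and the annihilation operator (u + d/du)/√2 with d/dz. -/

import Mathlib

/-!
Both identities come from differentiating the Bargmann kernel:
`∂ᵤ A(z,u) = (√2 z - u) A(z,u)` and `∂_z A(z,u) = (√2 u - z) A(z,u)`.
The first, after an integration by parts, turns `SB[f′]` into `SB[u f] - √2 z SB f`; the second,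
after differentiating under the integral sign, gives `(SB f)′ = √2 SB[u f] - z SB f`.
Both manipulations are justified by the Gaussian domination `‖A(x,u)‖ ≤ e^{3R²} e^{-u²/4}`
for `‖x‖ ≤ R`.
-/

open MeasureTheory

/-- The Bargmann kernel `A(z,u) = exp(-u²/2 + √2 u z - z²/2)`. -/
noncomputable def bargmannKernel (z : ℂ) (u : ℝ) : ℂ :=
  Complex.exp (-(u : ℂ) ^ 2 / 2 + (Real.sqrt 2 : ℂ) * (u : ℂ) * z - z ^ 2 / 2)

/-- The Segal–Bargmann transform of `f : ℝ → ℂ`. -/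
noncomputable def segalBargmann (f : ℝ → ℂ) (z : ℂ) : ℂ :=
  ∫ u : ℝ, bargmannKernel z u * f u

lemma continuous_bargmannKernel (z : ℂ) : Continuous (bargmannKernel z) := by
  unfold bargmannKernel
  fun_prop

lemma hasDerivAt_bargmannKernel_right (z : ℂ) (u : ℝ) :
    HasDerivAt (bargmannKernel z) (((Real.sqrt 2 : ℂ) * z - u) * bargmannKernel z u) u := by
  have hexp : HasDerivAt
      (fun v : ℝ => -(v : ℂ) ^ 2 / 2 + (Real.sqrt 2 : ℂ) * (v : ℂ) * z - z ^ 2 / 2)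
      ((Real.sqrt 2 : ℂ) * z - u) u := by
    have hv : HasDerivAt (fun v : ℝ => (v : ℂ)) 1 u := (hasDerivAt_id u).ofReal_comp
    refine (((((hv.pow 2).neg).div_const 2).add
      ((hv.const_mul (Real.sqrt 2 : ℂ)).mul_const z)).sub_const (z ^ 2 / 2)).congr_deriv ?_
    push_cast
    ring
  rw [mul_comm]
  exact hexp.cexp

lemma hasDerivAt_bargmannKernel_left (z : ℂ) (u : ℝ) :
    HasDerivAt (fun x : ℂ => bargmannKernel x u)
      (((Real.sqrt 2 : ℂ) * u - z) * bargmannKernel z u) z := by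
  have hexp : HasDerivAt
      (fun x : ℂ => -(u : ℂ) ^ 2 / 2 + (Real.sqrt 2 : ℂ) * (u : ℂ) * x - x ^ 2 / 2)
      ((Real.sqrt 2 : ℂ) * u - z) z := by
    refine ((((hasDerivAt_id' z).const_mul ((Real.sqrt 2 : ℂ) * u)).const_add
      (-(u : ℂ) ^ 2 / 2)).sub (((hasDerivAt_id' z).pow 2).div_const 2)).congr_deriv ?_
    push_cast
    ring
  rw [mul_comm]
  exact hexp.cexp

lemma norm_bargmannKernel_le {x : ℂ} {R : ℝ} (hx : ‖x‖ ≤ R) (u : ℝ) :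
    ‖bargmannKernel x u‖ ≤ Real.exp (3 * R ^ 2) * Real.exp (-(1 / 4) * u ^ 2) := by
  have hR : x.re ^ 2 + x.im ^ 2 ≤ R ^ 2 := by
    rw [pow_two x.re, pow_two x.im, ← Complex.normSq_apply, ← Complex.sq_norm]
    exact pow_le_pow_left₀ (norm_nonneg x) hx 2
  have hre : (-(u : ℂ) ^ 2 / 2 + (Real.sqrt 2 : ℂ) * u * x - x ^ 2 / 2).re =
      -u ^ 2 / 2 + Real.sqrt 2 * u * x.re - (x.re ^ 2 - x.im ^ 2) / 2 := by
    simp [pow_two]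
  have hsqrt : Real.sqrt 2 ^ 2 = 2 := Real.sq_sqrt zero_le_two
  rw [bargmannKernel, Complex.norm_exp, hre, ← Real.exp_add, Real.exp_le_exp]
  nlinarith [sq_nonneg (u / 2 - Real.sqrt 2 * x.re), sq_nonneg x.im]

lemma integrable_bargmannKernel (z : ℂ) : Integrable (bargmannKernel z) :=
  ((integrable_exp_neg_mul_sq (by norm_num)).const_mul _).mono'
    (continuous_bargmannKernel z).aestronglyMeasurable (ae_of_all _ (norm_bargmannKernel_le le_rfl))

lemma integrable_bargmannKernel_mul (z : ℂ) {g : ℝ → ℂ} (hg : AEStronglyMeasurable g)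
    {C : ℝ} (hC : ∀ u, ‖g u‖ ≤ C) : Integrable fun u => bargmannKernel z u * g u :=
  (integrable_bargmannKernel z).mul_bdd hg (ae_of_all _ hC)

lemma segalBargmann_sub {g h : ℝ → ℂ} {z : ℂ} (hg : Integrable fun u => bargmannKernel z u * g u)
    (hh : Integrable fun u => bargmannKernel z u * h u) :
    segalBargmann (fun u => g u - h u) z = segalBargmann g z - segalBargmann h z := by
  simp only [segalBargmann, mul_sub]
  exact integral_sub hg hh

lemma segalBargmann_deriv {g : ℝ → ℂ} (hg : Differentiable ℝ g) {C₀ C₁ C₂ : ℝ}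
    (hg₀ : ∀ u, ‖g u‖ ≤ C₀) (hg₁ : ∀ u : ℝ, ‖(u : ℂ) * g u‖ ≤ C₁) (hg₂ : ∀ u, ‖deriv g u‖ ≤ C₂)
    (z : ℂ) :
    segalBargmann (deriv g) z =
      segalBargmann (fun u => u * g u) z - Real.sqrt 2 * z * segalBargmann g z := by
  have hg_meas : AEStronglyMeasurable g := hg.continuous.aestronglyMeasurable
  have hint₀ := integrable_bargmannKernel_mul z hg_meas hg₀
  have hint₁ : Integrable fun u => bargmannKernel z u * (u * g u) :=
    integrable_bargmannKernel_mul z (Complex.continuous_ofReal.aestronglyMeasurable.mul hg_meas) hg₁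
  have hint₂ := integrable_bargmannKernel_mul z (measurable_deriv g).aestronglyMeasurable hg₂
  have hint' : Integrable fun u => ((Real.sqrt 2 : ℂ) * z - u) * bargmannKernel z u * g u := by
    refine ((hint₀.const_mul ((Real.sqrt 2 : ℂ) * z)).sub hint₁).congr (ae_of_all _ fun u => ?_)
    simp only [Pi.sub_apply]
    ring
  have hparts := integral_mul_deriv_eq_deriv_mul_of_integrable
    (fun u _ => hasDerivAt_bargmannKernel_right z u) (fun u _ => (hg u).hasDerivAt)
    hint₂ hint' hint₀
  rw [segalBargmann, hparts, segalBargmann, segalBargmann, ← integral_neg, ← integral_const_mul,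
    ← integral_sub hint₁ (hint₀.const_mul _)]
  refine integral_congr_ae (ae_of_all _ fun u => ?_)
  ring

lemma hasDerivAt_segalBargmann {g : ℝ → ℂ} (hg : AEStronglyMeasurable g) {C₀ C₁ : ℝ}
    (hg₀ : ∀ u, ‖g u‖ ≤ C₀) (hg₁ : ∀ u : ℝ, ‖(u : ℂ) * g u‖ ≤ C₁) (z : ℂ) :
    HasDerivAt (segalBargmann g)
      (Real.sqrt 2 * segalBargmann (fun u => u * g u) z - z * segalBargmann g z) z := by
  set R := ‖z‖ + 1
  have hR : ∀ x ∈ Metric.ball z 1, ‖x‖ ≤ R := fun x hx => (norm_lt_of_mem_ball hx).le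
  have hg₁_meas : AEStronglyMeasurable fun u : ℝ => (u : ℂ) * g u :=
    Complex.continuous_ofReal.aestronglyMeasurable.mul hg
  have hbound : ∀ u, ∀ x ∈ Metric.ball z 1,
      ‖bargmannKernel x u * (Real.sqrt 2 * (u * g u) - x * g u)‖ ≤
        (Real.sqrt 2 * C₁ + R * C₀) * (Real.exp (3 * R ^ 2) * Real.exp (-(1 / 4) * u ^ 2)) := by
    intro u x hx
    have hfactor : ‖(Real.sqrt 2 : ℂ) * (u * g u) - x * g u‖ ≤ Real.sqrt 2 * C₁ + R * C₀ := by
      refine (norm_sub_le _ _).trans (add_le_add ?_ ?_) <;> rw [norm_mul]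
      · rw [Complex.norm_real, Real.norm_of_nonneg (Real.sqrt_nonneg 2)]
        exact mul_le_mul_of_nonneg_left (hg₁ u) (Real.sqrt_nonneg 2)
      · exact mul_le_mul (hR x hx) (hg₀ u) (norm_nonneg _) ((norm_nonneg x).trans (hR x hx))
    rw [norm_mul, mul_comm]
    exact mul_le_mul hfactor (norm_bargmannKernel_le (hR x hx) u) (norm_nonneg _)
      ((norm_nonneg _).trans hfactor)
  have hderiv := (hasDerivAt_integral_of_dominated_loc_of_deriv_le
    (F := fun x u => bargmannKernel x u * g u)
    (F' := fun x u => bargmannKernel x u * (Real.sqrt 2 * (u * g u) - x * g u))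
    (Metric.ball_mem_nhds z one_pos)
    (Filter.Eventually.of_forall fun x => (integrable_bargmannKernel_mul x hg hg₀).1)
    (integrable_bargmannKernel_mul z hg hg₀)
    ((continuous_bargmannKernel z).aestronglyMeasurable.mul
      ((hg₁_meas.const_mul _).sub (hg.const_mul z)))
    (ae_of_all _ hbound) (((integrable_exp_neg_mul_sq (by norm_num)).const_mul _).const_mul _)
    (ae_of_all _ fun u x _ => ((hasDerivAt_bargmannKernel_left x u).mul_const (g u)).congr_deriv
      (by ring))).2
  refine hderiv.congr_deriv ?_
  rw [segalBargmann, segalBargmann, ← integral_const_mul, ← integral_const_mul,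
    ← integral_sub ((integrable_bargmannKernel_mul z hg₁_meas hg₁).const_mul _)
      ((integrable_bargmannKernel_mul z hg hg₀).const_mul _)]
  refine integral_congr_ae (ae_of_all _ fun u => ?_)
  ring

lemma SchwartzMap.norm_ofReal_mul_le_seminorm (f : SchwartzMap ℝ ℂ) (u : ℝ) :
    ‖(u : ℂ) * f u‖ ≤ SchwartzMap.seminorm ℝ 1 0 f := by
  simpa [norm_mul] using SchwartzMap.norm_pow_mul_le_seminorm ℝ f 1 u

lemma SchwartzMap.norm_deriv_le_seminorm (f : SchwartzMap ℝ ℂ) (u : ℝ) :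
    ‖deriv f u‖ ≤ SchwartzMap.seminorm ℝ 0 0 (SchwartzMap.derivCLM ℝ ℂ f) := by
  simpa using SchwartzMap.norm_le_seminorm ℝ (SchwartzMap.derivCLM ℝ ℂ f) u

/-- The Segal–Bargmann transform intertwines the creation operator
`(u - d/du)/√2` with multiplication by `z`, and the annihilation operator
`(u + d/du)/√2` with `d/dz`: for a Schwartz function `f`,
`√2 z (SB f)(z) = SB[u f - f′](z)` and
`z (SB f)(z) + (SB f)′(z) = √2 SB[u f](z)`. -/
theorem segalBargmann_intertwines (f : SchwartzMap ℝ ℂ) :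
    ∀ z : ℂ,
      ((Real.sqrt 2 : ℂ) * z * segalBargmann (fun u => f u) z =
        segalBargmann (fun u : ℝ => (u : ℂ) * f u - deriv (fun v : ℝ => f v) u) z) ∧
      (z * segalBargmann (fun u => f u) z +
          deriv (segalBargmann (fun u => f u)) z =
        (Real.sqrt 2 : ℂ) * segalBargmann (fun u : ℝ => (u : ℂ) * f u) z) := by
  intro z
  have hf₀ := SchwartzMap.norm_le_seminorm ℝ f
  have hf₁ := f.norm_ofReal_mul_le_seminorm
  have hf₂ := f.norm_deriv_le_seminorm
  have hf_meas : AEStronglyMeasurable f := f.continuous.aestronglyMeasurable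
  refine ⟨?_, ?_⟩
  · have hint₁ : Integrable fun u => bargmannKernel z u * (u * f u) :=
      integrable_bargmannKernel_mul z
        (Complex.continuous_ofReal.aestronglyMeasurable.mul hf_meas) hf₁
    rw [segalBargmann_sub hint₁
      (integrable_bargmannKernel_mul z (measurable_deriv _).aestronglyMeasurable hf₂),
      segalBargmann_deriv f.differentiable hf₀ hf₁ hf₂]
    ring
  · rw [(hasDerivAt_segalBargmann hf_meas hf₀ hf₁ z).deriv]
    ring
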